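/- arXiv:cs/0702029 — 8 statements merged into one kernel-verified Lean document; each statement's English description precedes it below -/
import Mathlib

section
/- Let w_hat : [n] → ℝ be random estimators on a probability space with E[ŵ_i] = w_i for all i, and for I ⊆ [n] define ŵ_I = ∑_{i∈I} ŵ_i. If I is a uniformly random subset of [n] of size m (with 1 ≤ m ≤ n, n ≥ 2), then the expected variance satisfies E_I[Var[ŵ_I]] = (m/n)·((n−m)/(n−1)·∑_{i∈[n]} Var[ŵ_i] + (m−1)/(n−1)·Var[ŵ_{[n]}]). -/
open MeasureTheory ProbabilityTheory Finset

/-!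
Expanding `Var[ŵ_I] = ∑_{i,j ∈ I} Cov(ŵ_i, ŵ_j)` and averaging over `I`, a diagonal term
survives with probability `m/n` and an off-diagonal one with probability `m(m-1)/(n(n-1))`;
regrouping the diagonal and the full double sum gives the formula.
-/

namespace Finset

variable {α : Type*} [DecidableEq α]

/-- The multiplied form avoids truncated subtraction and also covers `k < #t`, where both
sides vanish. -/
theorem card_filter_powersetCard_superset_mul_choose {s t : Finset α} (hts : t ⊆ s) (k : ℕ) :
    #{I ∈ s.powersetCard k | t ⊆ I} * (#s).choose #t = (#s).choose k * k.choose #t := by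
  rcases le_or_gt #t k with htk | hkt
  · rw [card_filter_powersetCard_subset t s k hts htk, Nat.choose_mul htk, mul_comm]
  · rw [Nat.choose_eq_zero_of_lt hkt, mul_zero, mul_eq_zero, card_eq_zero]
    refine .inl (filter_false_of_mem fun I hI htI => ?_)
    have := card_le_card htI
    rw [(mem_powersetCard.1 hI).2] at this
    omega

theorem cast_card_filter_powersetCard_pair_subset {s : Finset α} {i j : α} (hi : i ∈ s)
    (hj : j ∈ s) (k : ℕ) :
    (#{I ∈ s.powersetCard k | {i, j} ⊆ I} : ℝ) = (#s).choose k *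
      if i = j then (k : ℝ) / #s else k * (k - 1) / (#s * (#s - 1)) := by
  have hpair : ({i, j} : Finset α) ⊆ s := insert_subset hi (singleton_subset_iff.2 hj)
  have hcount :=
    congrArg (Nat.cast (R := ℝ)) (card_filter_powersetCard_superset_mul_choose hpair k)
  push_cast at hcount
  split_ifs at hcount ⊢ with hij
  · subst hij
    have hs : (#s : ℝ) ≠ 0 := by exact_mod_cast (card_pos.2 ⟨i, hi⟩).ne'
    simp only [pair_eq_singleton, card_singleton, Nat.choose_one_right] at hcount
    rw [pair_eq_singleton, mul_div_assoc', eq_div_iff hs, hcount]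
  · have hs : 2 ≤ #s := card_pair hij ▸ card_le_card hpair
    have hs2 : (2 : ℝ) ≤ #s := by exact_mod_cast hs
    have hs0 : (#s : ℝ) * (#s - 1) ≠ 0 := by nlinarith
    rw [card_pair hij, Nat.cast_choose_two, Nat.cast_choose_two] at hcount
    rw [mul_div_assoc', eq_div_iff hs0]
    linear_combination 2 * hcount

theorem sum_powersetCard_sum_sum {M : Type*} [AddCommMonoid M] (s : Finset α) (m : ℕ)
    (f : α → α → M) :
    ∑ I ∈ s.powersetCard m, ∑ i ∈ I, ∑ j ∈ I, f i j
      = ∑ i ∈ s, ∑ j ∈ s, #{I ∈ s.powersetCard m | {i, j} ⊆ I} • f i j := by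
  have hI : ∀ I ∈ s.powersetCard m, ∑ i ∈ I, ∑ j ∈ I, f i j
      = ∑ i ∈ s, ∑ j ∈ s, if {i, j} ⊆ I then f i j else 0 := by
    intro I hI
    have hsI : s ∩ I = I := inter_eq_right.2 (mem_powersetCard.1 hI).1
    have hrow : ∀ i, ∑ j ∈ s, (if {i, j} ⊆ I then f i j else 0)
        = if i ∈ I then ∑ j ∈ I, f i j else 0 := fun i => by
      by_cases hi : i ∈ I <;> simp [hi, insert_subset_iff, sum_ite_mem, hsI]
    simp only [hrow, sum_ite_mem, hsI]
  rw [sum_congr rfl hI, sum_comm]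
  refine sum_congr rfl fun i _ => ?_
  rw [sum_comm]
  exact sum_congr rfl fun j _ => by rw [← sum_filter, sum_const]

theorem sum_powersetCard_sum_sum_div_choose (s : Finset α) {m : ℕ} (hs : 2 ≤ #s) (hm : m ≤ #s)
    (f : α → α → ℝ) :
    (∑ I ∈ s.powersetCard m, ∑ i ∈ I, ∑ j ∈ I, f i j) / (#s).choose m
      = (m / #s) * ((#s - m) / (#s - 1) * ∑ i ∈ s, f i i
          + (m - 1) / (#s - 1) * ∑ i ∈ s, ∑ j ∈ s, f i j) := by
  have hn : (2 : ℝ) ≤ #s := by exact_mod_cast hs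
  have hC : ((#s).choose m : ℝ) ≠ 0 := by exact_mod_cast (Nat.choose_pos hm).ne'
  set C : ℝ := ((#s).choose m : ℝ)
  set q : ℝ := (m : ℝ) * (m - 1) / (#s * (#s - 1))
  have hrow : ∀ i ∈ s, ∑ j ∈ s, #{I ∈ s.powersetCard m | {i, j} ⊆ I} • f i j
      = C * (q * ∑ j ∈ s, f i j + (m / #s - q) * f i i) := fun i hi => calc
    _ = ∑ j ∈ s, (C * q * f i j + if i = j then C * (m / #s - q) * f i j else 0) :=
      sum_congr rfl fun j hj => by
        rw [nsmul_eq_mul, cast_card_filter_powersetCard_pair_subset hi hj]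
        split_ifs <;> ring
    _ = C * (q * ∑ j ∈ s, f i j + (m / #s - q) * f i i) := by
      rw [sum_add_distrib, sum_ite_eq, if_pos hi, ← mul_sum]
      ring
  have hq : q = m / #s * ((m - 1) / (#s - 1)) := div_mul_div_comm _ _ _ _ |>.symm
  have hpq : m / #s - q = m / #s * ((#s - m) / (#s - 1)) := by
    have hn1 : (#s : ℝ) - 1 ≠ 0 := by linarith
    rw [hq]
    field_simp
    ring
  rw [sum_powersetCard_sum_sum, sum_congr rfl hrow, ← mul_sum, sum_add_distrib, ← mul_sum,
    ← mul_sum, mul_div_cancel_left₀ _ hC, hpq, hq]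
  ring

end Finset

theorem avg_variance_subset_size_m_general
    {Ω : Type*} [MeasurableSpace Ω] (μ : Measure Ω) [IsProbabilityMeasure μ]
    (n m : ℕ) (hn : 2 ≤ n) (hmn : m ≤ n)
    (what : Fin n → Ω → ℝ)
    (hL2 : ∀ i, MemLp (what i) 2 μ) :
    (∑ I ∈ (Finset.univ : Finset (Fin n)).powersetCard m,
        variance (fun ω => ∑ i ∈ I, what i ω) μ) / (n.choose m : ℝ)
      = ((m : ℝ) / n) *
        (((n : ℝ) - m) / ((n : ℝ) - 1) * ∑ i, variance (what i) μ
          + ((m : ℝ) - 1) / ((n : ℝ) - 1) *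
              variance (fun ω => ∑ i, what i ω) μ) := by
  have hvar : ∀ I : Finset (Fin n),
      variance (fun ω => ∑ i ∈ I, what i ω) μ = ∑ i ∈ I, ∑ j ∈ I, cov[what i, what j; μ] :=
    fun I => variance_fun_sum' fun i _ => hL2 i
  have hcov : ∀ i, variance (what i) μ = cov[what i, what i; μ] :=
    fun i => (covariance_self (hL2 i).aestronglyMeasurable.aemeasurable).symm
  have hmain := sum_powersetCard_sum_sum_div_choose univ (by simpa using hn) (by simpa using hmn)
    fun i j => cov[what i, what j; μ]
  simp only [card_univ, Fintype.card_fin] at hmain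
  simp only [hvar, hcov, hmain]

/-- Basic theorem, size-m version: for arbitrary (possibly correlated) unbiased
estimators `what i` of weights `w i`, the average over uniformly random subsets
`I` of size `m` of `Var[∑_{i∈I} what i]` equals
`(m/n)((n−m)/(n−1)·ΣV + (m−1)/(n−1)·VΣ)`. -/
theorem avg_variance_subset_size_m
    {Ω : Type*} [MeasurableSpace Ω] (μ : Measure Ω) [IsProbabilityMeasure μ]
    (n m : ℕ) (hn : 2 ≤ n) (hm1 : 1 ≤ m) (hmn : m ≤ n)
    (w : Fin n → ℝ) (what : Fin n → Ω → ℝ)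
    (hL2 : ∀ i, MemLp (what i) 2 μ)
    (hunb : ∀ i, ∫ ω, what i ω ∂μ = w i) :
    (∑ I ∈ (Finset.univ : Finset (Fin n)).powersetCard m,
        variance (fun ω => ∑ i ∈ I, what i ω) μ) / (n.choose m : ℝ)
      = ((m : ℝ) / n) *
        (((n : ℝ) - m) / ((n : ℝ) - 1) * ∑ i, variance (what i) μ
          + ((m : ℝ) - 1) / ((n : ℝ) - 1) *
              variance (fun ω => ∑ i, what i ω) μ) :=
  avg_variance_subset_size_m_general μ n m hn hmn what hL2
end

section
/- Let ŵ_i, i ∈ [n], be random estimators with E[ŵ_i] = w_i. If I ⊆ [n] is a random subset where each item is included independently with probability p ∈ [0,1], independently of the estimators, then E_I[Var[ŵ_I]] = p·((1−p)·∑_{i∈[n]} Var[ŵ_i] + p·Var[ŵ_{[n]}]). -/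
open MeasureTheory ProbabilityTheory Finset

/-!
Expand `Var[ŵ_I] = ∑_{i,j ∈ I} Cov(ŵ_i, ŵ_j)` and average over `I`: both `i` and `j` lie in `I`
with probability `p ^ #{i, j}`, which is `p` on the diagonal and `p²` off it. The average is
therefore `p² ∑_{i,j} Cov(ŵ_i, ŵ_j) + (p - p²) ∑_i Var[ŵ_i]`, an algebraic identity in `p`.
-/

namespace Finset

variable {α R : Type*} [DecidableEq α] [CommRing R] (p : R) {s u : Finset α}

theorem sum_powerset_superset_pow_mul_one_sub_pow (hu : u ⊆ s) :
    ∑ t ∈ s.powerset with u ⊆ t, p ^ #t * (1 - p) ^ (#s - #t) = p ^ #u := by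
  have hmiss : ∀ t ∈ s.powerset,
      ∏ k ∈ s \ t, (if k ∈ u then 0 else 1 - p) = if u ⊆ t then (1 - p) ^ (#s - #t) else 0 := by
    intro t ht
    split_ifs with hut
    · rw [prod_congr rfl fun k hk => if_neg fun hku => (mem_sdiff.1 hk).2 (hut hku), prod_const,
        card_sdiff_of_subset (mem_powerset.1 ht)]
    · obtain ⟨k, hku, hkt⟩ := not_subset.1 hut
      exact prod_eq_zero (mem_sdiff.2 ⟨hu hku, hkt⟩) (if_pos hku)
  -- Expand `∏_{k ∈ s} (p + [k ∉ u] (1 - p))`: a term vanishes unless its complement misses `u`.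
  calc ∑ t ∈ s.powerset with u ⊆ t, p ^ #t * (1 - p) ^ (#s - #t)
      = ∑ t ∈ s.powerset, (∏ _k ∈ t, p) * ∏ k ∈ s \ t, (if k ∈ u then 0 else 1 - p) := by
        rw [sum_filter]
        refine sum_congr rfl fun t ht => ?_
        rw [hmiss t ht, prod_const, mul_ite, mul_zero]
    _ = ∏ k ∈ s, (p + if k ∈ u then 0 else 1 - p) := (prod_add _ _ s).symm
    _ = p ^ #u := by
        simp_rw [add_ite, add_zero, add_sub_cancel, prod_ite_mem, inter_eq_right.2 hu, prod_const]

theorem sum_powerset_pow_mul_one_sub_pow_mul_sum_sum (c : α → α → R) :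
    ∑ t ∈ s.powerset, p ^ #t * (1 - p) ^ (#s - #t) * ∑ i ∈ t, ∑ j ∈ t, c i j
      = ∑ i ∈ s, ∑ j ∈ s, p ^ #{i, j} * c i j := by
  have hexpand : ∀ t ∈ s.powerset, ∑ i ∈ t, ∑ j ∈ t, c i j
      = ∑ i ∈ s, ∑ j ∈ s, if {i, j} ⊆ t then c i j else 0 := by
    intro t ht
    simp only [insert_subset_iff, singleton_subset_iff, ite_and, sum_ite_irrel, sum_const_zero,
      sum_ite_mem, inter_eq_right.2 (mem_powerset.1 ht)]
  calc ∑ t ∈ s.powerset, p ^ #t * (1 - p) ^ (#s - #t) * ∑ i ∈ t, ∑ j ∈ t, c i j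
      = ∑ t ∈ s.powerset, ∑ i ∈ s, ∑ j ∈ s,
          if {i, j} ⊆ t then p ^ #t * (1 - p) ^ (#s - #t) * c i j else 0 := by
        refine sum_congr rfl fun t ht => ?_
        simp only [hexpand t ht, mul_sum, mul_ite, mul_zero]
    _ = ∑ i ∈ s, ∑ j ∈ s, ∑ t ∈ s.powerset,
          if {i, j} ⊆ t then p ^ #t * (1 - p) ^ (#s - #t) * c i j else 0 := by
        rw [sum_comm]
        exact sum_congr rfl fun i _ => sum_comm
    _ = ∑ i ∈ s, ∑ j ∈ s, p ^ #{i, j} * c i j := by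
        refine sum_congr rfl fun i hi => sum_congr rfl fun j hj => ?_
        rw [← sum_filter, ← sum_mul, sum_powerset_superset_pow_mul_one_sub_pow]
        exact insert_subset hi (singleton_subset_iff.2 hj)

theorem sum_sum_pow_card_pair_mul (c : α → α → R) :
    ∑ i ∈ s, ∑ j ∈ s, p ^ #{i, j} * c i j
      = p * ((1 - p) * ∑ i ∈ s, c i i + p * ∑ i ∈ s, ∑ j ∈ s, c i j) := by
  have hpair : ∀ i j : α, p ^ #{i, j} = p ^ 2 + if i = j then p - p ^ 2 else 0 := by
    intro i j
    split_ifs with h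
    · simp [h]
    · rw [card_pair h]; ring
  calc ∑ i ∈ s, ∑ j ∈ s, p ^ #{i, j} * c i j
      = ∑ i ∈ s, (p ^ 2 * ∑ j ∈ s, c i j + (p - p ^ 2) * c i i) := by
        refine sum_congr rfl fun i hi => ?_
        simp only [hpair, add_mul, sum_add_distrib, ite_mul, zero_mul, sum_ite_eq, if_pos hi,
          mul_sum]
    _ = p * ((1 - p) * ∑ i ∈ s, c i i + p * ∑ i ∈ s, ∑ j ∈ s, c i j) := by
        rw [sum_add_distrib, ← mul_sum, ← mul_sum]
        ring

end Finset

theorem avg_variance_subset_prob_p_general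
    {Ω : Type*} [MeasurableSpace Ω] (μ : Measure Ω) [IsProbabilityMeasure μ]
    (n : ℕ) (p : ℝ)
    (what : Fin n → Ω → ℝ)
    (hL2 : ∀ i, MemLp (what i) 2 μ) :
    ∑ I ∈ (Finset.univ : Finset (Fin n)).powerset,
        p ^ I.card * (1 - p) ^ (n - I.card) *
          variance (fun ω => ∑ i ∈ I, what i ω) μ
      = p * ((1 - p) * ∑ i, variance (what i) μ
          + p * variance (fun ω => ∑ i, what i ω) μ) := by
  have hsum (I : Finset (Fin n)) :
      Var[fun ω => ∑ i ∈ I, what i ω; μ] = ∑ i ∈ I, ∑ j ∈ I, cov[what i, what j; μ] :=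
    variance_fun_sum' fun i _ => hL2 i
  have hself (i : Fin n) : Var[what i; μ] = cov[what i, what i; μ] :=
    (covariance_self (hL2 i).aemeasurable).symm
  simp only [hsum, hself]
  calc _ = ∑ i, ∑ j, p ^ #{i, j} * cov[what i, what j; μ] := by
        simpa only [card_fin] using sum_powerset_pow_mul_one_sub_pow_mul_sum_sum p (s := univ)
          fun i j => cov[what i, what j; μ]
    _ = _ := sum_sum_pow_card_pair_mul p _

/-- Basic theorem, probability-p version: for arbitrary (possibly correlated)
unbiased estimators, the expected variance of `∑_{i∈I} what i` over a random
subset `I` including each item independently with probability `p` equals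
`p((1−p)·ΣV + p·VΣ)`. -/
theorem avg_variance_subset_prob_p
    {Ω : Type*} [MeasurableSpace Ω] (μ : Measure Ω) [IsProbabilityMeasure μ]
    (n : ℕ) (p : ℝ) (hp0 : 0 ≤ p) (hp1 : p ≤ 1)
    (w : Fin n → ℝ) (what : Fin n → Ω → ℝ)
    (hL2 : ∀ i, MemLp (what i) 2 μ)
    (hunb : ∀ i, ∫ ω, what i ω ∂μ = w i) :
    ∑ I ∈ (Finset.univ : Finset (Fin n)).powerset,
        p ^ I.card * (1 - p) ^ (n - I.card) *
          variance (fun ω => ∑ i ∈ I, what i ω) μ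
      = p * ((1 - p) * ∑ i, variance (what i) μ
          + p * variance (fun ω => ∑ i, what i ω) μ) :=
  avg_variance_subset_prob_p_general μ n p what hL2
end

section
/- Let ŵ_i be unbiased estimators of w_i. Partition [n] into q subsets by assigning each item independently and uniformly at random to one of q classes. Then the expected total variance summed over all q classes equals (1−1/q)·∑_i Var[ŵ_i] + (1/q)·Var[ŵ_{[n]}]. -/
/-!
Expanding the variance of each class sum into covariances, the total variance of a partition `g`
is `∑ i, ∑ j, [g i = g j] * Cov(ŵ_i, ŵ_j)`. Averaging over the uniform `g`, two items fall into the
same class with probability `1` if they coincide and `1/q` otherwise, which leaves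
`∑ i, Var ŵ_i + (1/q) ∑_{i ≠ j} Cov(ŵ_i, ŵ_j) = (1 - 1/q) ∑ i, Var ŵ_i + (1/q) Var ŵ_{[n]}`.
-/

open MeasureTheory ProbabilityTheory Finset

section RandomFunction

variable {α β : Type*} [Fintype α] [DecidableEq α] [Fintype β] [DecidableEq β]

lemma card_filter_apply_eq_apply_of_ne {i j : α} (hij : i ≠ j) :
    #{g : α → β | g j = g i} = Fintype.card β ^ (Fintype.card α - 1) := by
  let j' : {k // k ≠ i} := ⟨j, hij.symm⟩
  calc #{g : α → β | g j = g i}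
      = ∑ p : β × ({k // k ≠ i} → β), if p.2 j' = p.1 then 1 else 0 := by
        rw [card_filter]
        exact Fintype.sum_equiv (Equiv.funSplitAt i β) _ _ fun g => by
          simp [j', Equiv.funSplitAt_apply]
    _ = Fintype.card ({k // k ≠ i} → β) := by
        rw [Fintype.sum_prod_type_right]
        simp
    _ = Fintype.card β ^ (Fintype.card α - 1) := by
        simp [Fintype.card_subtype_compl]

lemma card_filter_apply_eq_apply_div {K : Type*} [Field K] [CharZero K] [Nonempty β] (i j : α) :
    (#{g : α → β | g j = g i} : K) / (Fintype.card β : K) ^ Fintype.card α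
      = if i = j then 1 else (Fintype.card β : K)⁻¹ := by
  have hq : (Fintype.card β : K) ≠ 0 := by simp
  split_ifs with hij
  · simp [hij, hq]
  · rw [card_filter_apply_eq_apply_of_ne hij, Nat.cast_pow,
      ← pow_sub_one_mul (Fintype.card_pos_iff.mpr ⟨i⟩).ne']
    field_simp

lemma sum_fun_sum_sum_ite_apply_eq_div {K : Type*} [Field K] [CharZero K] [Nonempty β]
    (f : α → α → K) :
    (∑ g : α → β, ∑ i, ∑ j, if g j = g i then f i j else 0) / (Fintype.card β : K) ^ Fintype.card α
      = ∑ i, ∑ j, (if i = j then 1 else (Fintype.card β : K)⁻¹) * f i j := by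
  rw [Finset.sum_comm, sum_div]
  refine sum_congr rfl fun i _ => ?_
  rw [Finset.sum_comm, sum_div]
  refine sum_congr rfl fun j _ => ?_
  rw [← card_filter_apply_eq_apply_div, div_mul_eq_mul_div, card_filter, Nat.cast_sum, sum_mul]
  simp_rw [Nat.cast_ite, Nat.cast_one, Nat.cast_zero, boole_mul]

end RandomFunction

lemma sum_sum_filter_eq_sum_sum_ite {ι κ M : Type*} [Fintype ι] [Fintype κ] [DecidableEq κ]
    [AddCommMonoid M] (g : ι → κ) (f : ι → ι → M) :
    ∑ c, ∑ i ∈ {i | g i = c}, ∑ j ∈ {j | g j = c}, f i j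
      = ∑ i, ∑ j, if g j = g i then f i j else 0 := by
  simp_rw [sum_filter]
  rw [sum_comm]
  simp only [sum_ite_eq, mem_univ, if_true]

lemma sum_sum_ite_diag_mul {ι R : Type*} [Fintype ι] [DecidableEq ι] [CommRing R] (a : R)
    (f : ι → ι → R) :
    ∑ i, ∑ j, (if i = j then 1 else a) * f i j
      = (1 - a) * ∑ i, f i i + a * ∑ i, ∑ j, f i j := by
  have h : ∀ i j, (if i = j then 1 else a) * f i j
      = a * f i j + if i = j then (1 - a) * f i j else 0 := by
    intro i j
    split_ifs <;> ring
  simp_rw [h, sum_add_distrib, sum_ite_eq, mem_univ, if_true, mul_sum]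
  ring

lemma sum_variance_sum_filter {Ω ι κ : Type*} [MeasurableSpace Ω] {μ : Measure Ω}
    [IsFiniteMeasure μ] [Fintype ι] [Fintype κ] [DecidableEq κ] {X : ι → Ω → ℝ}
    (hX : ∀ i, MemLp (X i) 2 μ) (g : ι → κ) :
    ∑ c, Var[fun ω => ∑ i ∈ {i | g i = c}, X i ω; μ]
      = ∑ i, ∑ j, if g j = g i then cov[X i, X j; μ] else 0 := by
  simp_rw [variance_fun_sum' fun i _ => hX i]
  exact sum_sum_filter_eq_sum_sum_ite g _

open scoped Classical in
theorem avg_total_variance_random_partition_general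
    {Ω : Type*} [MeasurableSpace Ω] (μ : Measure Ω) [IsProbabilityMeasure μ]
    (n q : ℕ) (hq : 1 ≤ q)
    (what : Fin n → Ω → ℝ)
    (hL2 : ∀ i, MemLp (what i) 2 μ) :
    (∑ g : Fin n → Fin q, ∑ c : Fin q,
        variance (fun ω => ∑ i ∈ Finset.univ.filter (fun i => g i = c), what i ω) μ)
        / ((q : ℝ) ^ n)
      = (1 - 1 / (q : ℝ)) * ∑ i, variance (what i) μ
          + (1 / (q : ℝ)) * variance (fun ω => ∑ i, what i ω) μ := by
  have : Nonempty (Fin q) := ⟨⟨0, hq⟩⟩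
  have h := sum_fun_sum_sum_ite_apply_eq_div (β := Fin q) fun i j => cov[what i, what j; μ]
  simp only [Fintype.card_fin] at h
  simp_rw [sum_variance_sum_filter hL2, h, sum_sum_ite_diag_mul, one_div,
    ← covariance_self (hL2 _).aemeasurable, variance_fun_sum hL2]

open scoped Classical in
/-- Random partition into `q` classes: each item is assigned independently and
uniformly to one of `q` classes. The expected total variance summed over all
`q` classes equals `(1 − 1/q)·ΣV + (1/q)·VΣ`. -/
theorem avg_total_variance_random_partition
    {Ω : Type*} [MeasurableSpace Ω] (μ : Measure Ω) [IsProbabilityMeasure μ]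
    (n q : ℕ) (hq : 1 ≤ q)
    (w : Fin n → ℝ) (what : Fin n → Ω → ℝ)
    (hL2 : ∀ i, MemLp (what i) 2 μ)
    (hunb : ∀ i, ∫ ω, what i ω ∂μ = w i) :
    (∑ g : Fin n → Fin q, ∑ c : Fin q,
        variance (fun ω => ∑ i ∈ Finset.univ.filter (fun i => g i = c), what i ω) μ)
        / ((q : ℝ) ^ n)
      = (1 - 1 / (q : ℝ)) * ∑ i, variance (what i) μ
          + (1 / (q : ℝ)) * variance (fun ω => ∑ i, what i ω) μ :=
  avg_total_variance_random_partition_general μ n q hq what hL2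
end

section
/- Suppose two unbiased sampling schemes Φ and Ψ satisfy the same hypotheses: equal ΣV, Ψ has zero pairwise covariance, and Φ satisfies Var^Φ[ŵ_{[n]}] = 0. Then for all p ∈ [0,1], W_p^Φ = (1−p)·W_p^Ψ, where W_p is the expected variance over subsets including each item independently with probability p. -/
/-!
If `I` contains each item independently with probability `p`, then `Var[∑ i ∈ I, X i]` is the sum
of `cov[X i, X j]` over the pairs with `i, j ∈ I`, an event of probability `p ^ #{i, j}`. Averaging
over `I` therefore gives `W_p = p² · Var[∑ i, X i] + p (1 - p) · ∑ i, Var[X i]`. A scheme with exact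
total has `W_p = p (1 - p) · ΣV`, one without covariances has `W_p = p · ΣV`.
-/

open MeasureTheory ProbabilityTheory Finset

lemma pow_card_pair {ι R : Type*} [DecidableEq ι] [Ring R] (p : R) (i j : ι) :
    p ^ #({i, j} : Finset ι) = p ^ 2 + if i = j then p - p ^ 2 else 0 := by
  by_cases hij : i = j
  · simp [hij]
  · simp [hij, card_pair hij]

section SubsetAverage

variable {ι R : Type*} [Fintype ι] [CommRing R]

/-- The expectation of `F I` for a random subset `I` containing each element independently with
probability `p`. -/
noncomputable def subsetAverage (p : R) (F : Finset ι → R) : R :=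
  ∑ I ∈ (univ : Finset ι).powerset, p ^ #I * (1 - p) ^ (Fintype.card ι - #I) * F I

lemma subsetAverage_sum {κ : Type*} (p : R) (s : Finset κ) (F : κ → Finset ι → R) :
    subsetAverage p (fun I => ∑ k ∈ s, F k I) = ∑ k ∈ s, subsetAverage p (F k) := by
  simp only [subsetAverage, mul_sum]
  exact sum_comm

lemma subsetAverage_mul_const (p : R) (F : Finset ι → R) (a : R) :
    subsetAverage p (fun I => F I * a) = subsetAverage p F * a := by
  simp only [subsetAverage, sum_mul, mul_assoc]

variable [DecidableEq ι]

lemma subsetAverage_superset_indicator (p : R) (S : Finset ι) :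
    subsetAverage p (fun I => if S ⊆ I then 1 else 0) = p ^ #S := by
  have hdisj : ∀ J ∈ (univ \ S).powerset, Disjoint S J := fun J hJ =>
    disjoint_of_subset_right (mem_powerset.1 hJ) disjoint_sdiff
  have hinj : Set.InjOn (S ∪ ·) ((univ \ S).powerset : Set (Finset ι)) := fun J hJ K hK hJK => by
    rw [← union_sdiff_cancel_left (hdisj J hJ), ← union_sdiff_cancel_left (hdisj K hK)]
    exact congrArg (· \ S) hJK
  calc subsetAverage p (fun I => if S ⊆ I then 1 else 0)
      = ∑ I ∈ Icc S univ, p ^ #I * (1 - p) ^ (Fintype.card ι - #I) := by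
        rw [subsetAverage, Icc_eq_filter_powerset, sum_filter]
        simp
    _ = ∑ J ∈ (univ \ S).powerset, p ^ #S * (p ^ #J * (1 - p) ^ (#(univ \ S) - #J)) := by
        rw [Icc_eq_image_powerset (subset_univ S), sum_image hinj]
        refine sum_congr rfl fun J hJ => ?_
        rw [card_union_of_disjoint (hdisj J hJ), pow_add, card_univ_sdiff, Nat.sub_sub, mul_assoc]
    _ = p ^ #S := by rw [← mul_sum, sum_pow_mul_eq_add_pow, add_sub_cancel, one_pow, mul_one]

lemma subsetAverage_sum_sum (p : R) (c : ι → ι → R) :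
    subsetAverage p (fun I => ∑ i ∈ I, ∑ j ∈ I, c i j)
      = p ^ 2 * ∑ i, ∑ j, c i j + (p - p ^ 2) * ∑ i, c i i := by
  have hpair : ∀ I : Finset ι, ∑ i ∈ I, ∑ j ∈ I, c i j
      = ∑ i, ∑ j, (if {i, j} ⊆ I then 1 else 0) * c i j := fun I => by
    simp only [insert_subset_iff, singleton_subset_iff, ite_and, ite_mul, one_mul, zero_mul,
      sum_ite_irrel, sum_const_zero, sum_ite_mem, univ_inter]
  calc subsetAverage p (fun I => ∑ i ∈ I, ∑ j ∈ I, c i j)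
      = ∑ i, ∑ j, p ^ #({i, j} : Finset ι) * c i j := by
        simp only [hpair, subsetAverage_sum, subsetAverage_mul_const,
          subsetAverage_superset_indicator]
    _ = p ^ 2 * ∑ i, ∑ j, c i j + (p - p ^ 2) * ∑ i, c i i := by
        simp only [pow_card_pair, add_mul, ite_mul, zero_mul, sum_add_distrib, sum_ite_eq,
          mem_univ, if_true, mul_sum]

end SubsetAverage

lemma subsetAverage_variance_sum {ι Ω : Type*} [Fintype ι] [DecidableEq ι] [MeasurableSpace Ω]
    {μ : Measure Ω} [IsFiniteMeasure μ] {X : ι → Ω → ℝ} (hX : ∀ i, MemLp (X i) 2 μ) (p : ℝ) :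
    subsetAverage p (fun I => Var[fun ω => ∑ i ∈ I, X i ω; μ])
      = p ^ 2 * Var[fun ω => ∑ i, X i ω; μ] + (p - p ^ 2) * ∑ i, Var[X i; μ] := by
  have hvar : ∀ i, cov[X i, X i; μ] = Var[X i; μ] := fun i => covariance_self (hX i).aemeasurable
  simp only [variance_fun_sum' fun i _ => hX i, subsetAverage_sum_sum, hvar]

theorem Wp_zero_total_variance_vs_no_covariance_general
    {Ω₁ Ω₂ : Type*} [MeasurableSpace Ω₁] [MeasurableSpace Ω₂]
    (μ₁ : Measure Ω₁) (μ₂ : Measure Ω₂)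
    [IsProbabilityMeasure μ₁] [IsProbabilityMeasure μ₂]
    (n : ℕ)
    (f : Fin n → Ω₁ → ℝ) (g : Fin n → Ω₂ → ℝ)
    (hf2 : ∀ i, MemLp (f i) 2 μ₁) (hg2 : ∀ i, MemLp (g i) 2 μ₂)
    (hsameSV : ∑ i, variance (f i) μ₁ = ∑ i, variance (g i) μ₂)
    (hg_nocov : variance (fun ω => ∑ i, g i ω) μ₂ = ∑ i, variance (g i) μ₂)
    (hf_total : variance (fun ω => ∑ i, f i ω) μ₁ = 0)
    (p : ℝ) :
    ∑ I ∈ (Finset.univ : Finset (Fin n)).powerset,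
        p ^ I.card * (1 - p) ^ (n - I.card) *
          variance (fun ω => ∑ i ∈ I, f i ω) μ₁
      = (1 - p) *
        ∑ I ∈ (Finset.univ : Finset (Fin n)).powerset,
          p ^ I.card * (1 - p) ^ (n - I.card) *
            variance (fun ω => ∑ i ∈ I, g i ω) μ₂ := by
  have hWf := subsetAverage_variance_sum hf2 p
  have hWg := subsetAverage_variance_sum hg2 p
  simp only [subsetAverage, Fintype.card_fin] at hWf hWg
  rw [hWf, hWg, hf_total, hg_nocov, hsameSV]
  ring

/-- The `p`-version of the systematic-vs-threshold comparison: under the same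
hypotheses (equal `ΣV`, `g` has zero pairwise covariance, `f` estimates the
total exactly), for all `p ∈ [0,1]` we have `W_p^f = (1−p)·W_p^g`. -/
theorem Wp_zero_total_variance_vs_no_covariance
    {Ω₁ Ω₂ : Type*} [MeasurableSpace Ω₁] [MeasurableSpace Ω₂]
    (μ₁ : Measure Ω₁) (μ₂ : Measure Ω₂)
    [IsProbabilityMeasure μ₁] [IsProbabilityMeasure μ₂]
    (n : ℕ) (w : Fin n → ℝ)
    (f : Fin n → Ω₁ → ℝ) (g : Fin n → Ω₂ → ℝ)
    (hf2 : ∀ i, MemLp (f i) 2 μ₁) (hg2 : ∀ i, MemLp (g i) 2 μ₂)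
    (hfu : ∀ i, ∫ ω, f i ω ∂μ₁ = w i) (hgu : ∀ i, ∫ ω, g i ω ∂μ₂ = w i)
    (hsameSV : ∑ i, variance (f i) μ₁ = ∑ i, variance (g i) μ₂)
    (hg_nocov : variance (fun ω => ∑ i, g i ω) μ₂ = ∑ i, variance (g i) μ₂)
    (hf_total : variance (fun ω => ∑ i, f i ω) μ₁ = 0)
    (p : ℝ) (hp0 : 0 ≤ p) (hp1 : p ≤ 1) :
    ∑ I ∈ (Finset.univ : Finset (Fin n)).powerset,
        p ^ I.card * (1 - p) ^ (n - I.card) *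
          variance (fun ω => ∑ i ∈ I, f i ω) μ₁
      = (1 - p) *
        ∑ I ∈ (Finset.univ : Finset (Fin n)).powerset,
          p ^ I.card * (1 - p) ^ (n - I.card) *
            variance (fun ω => ∑ i ∈ I, g i ω) μ₂ :=
  Wp_zero_total_variance_vs_no_covariance_general μ₁ μ₂ n f g hf2 hg2 hsameSV hg_nocov hf_total p
end

section
/- If an unbiased sampling scheme Φ minimizes both the sum of individual variances ΣV and the variance of the total VΣ over all unbiased schemes using at most k expected samples, then for every subset size m, Φ minimizes V_m over all such schemes; similarly Φ minimizes W_p for every p ∈ [0,1]. -/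
open MeasureTheory ProbabilityTheory Finset

/-- Sum of individual variances `ΣV` of a sampling scheme. -/
noncomputable def sumVar {Ω : Type*} [MeasurableSpace Ω] (μ : MeasureTheory.Measure Ω)
    {n : ℕ} (f : Fin n → Ω → ℝ) : ℝ :=
  ∑ i, ProbabilityTheory.variance (f i) μ

/-- Variance of the total `VΣ` of a sampling scheme. -/
noncomputable def varSum {Ω : Type*} [MeasurableSpace Ω] (μ : MeasureTheory.Measure Ω)
    {n : ℕ} (f : Fin n → Ω → ℝ) : ℝ :=
  ProbabilityTheory.variance (fun ω => ∑ i, f i ω) μ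

/-- `V_m`: average variance of the subset-sum estimate over uniformly random
subsets of size `m`. -/
noncomputable def Vm {Ω : Type*} [MeasurableSpace Ω] (μ : MeasureTheory.Measure Ω)
    {n : ℕ} (f : Fin n → Ω → ℝ) (m : ℕ) : ℝ :=
  (∑ I ∈ (Finset.univ : Finset (Fin n)).powersetCard m,
      ProbabilityTheory.variance (fun ω => ∑ i ∈ I, f i ω) μ) / (n.choose m : ℝ)

/-- `W_p`: expected variance of the subset-sum estimate over random subsets
including each item independently with probability `p`. -/
noncomputable def Wp {Ω : Type*} [MeasurableSpace Ω] (μ : MeasureTheory.Measure Ω)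
    {n : ℕ} (f : Fin n → Ω → ℝ) (p : ℝ) : ℝ :=
  ∑ I ∈ (Finset.univ : Finset (Fin n)).powerset,
    p ^ I.card * (1 - p) ^ (n - I.card) *
      ProbabilityTheory.variance (fun ω => ∑ i ∈ I, f i ω) μ

/-- A scheme is unbiased for weights `w` if each estimator has mean `w i`. -/
def UnbiasedScheme {Ω : Type*} [MeasurableSpace Ω] (μ : MeasureTheory.Measure Ω)
    {n : ℕ} (f : Fin n → Ω → ℝ) (w : Fin n → ℝ) : Prop :=
  ∀ i, ∫ ω, f i ω ∂μ = w i

open scoped Classical in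
/-- Expected number of samples: expected number of nonzero estimates. -/
noncomputable def expSamples {Ω : Type*} [MeasurableSpace Ω] (μ : MeasureTheory.Measure Ω)
    {n : ℕ} (f : Fin n → Ω → ℝ) : ℝ :=
  ∫ ω, ((Finset.univ.filter (fun i : Fin n => f i ω ≠ 0)).card : ℝ) ∂μ

/-!
`Var[∑ i ∈ I, f i]` is the sum of the covariances `cov[f i, f j]` over `i, j ∈ I`. Average it
over a random subset `I` for which the probability `π #s` that `I` contains `s` depends only
on `#s`: the diagonal terms receive weight `π 1` and the off-diagonal ones `π 2`, so the average
is `(π 1 - π 2) * ΣV + π 2 * VΣ`. As `0 ≤ π 2 ≤ π 1`, a scheme minimising both `ΣV` and `VΣ`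
minimises this average. For uniform `m`-subsets `π k = C(n - k, m - k) / C(n, m)`, and for
subsets drawn with independent inclusion probability `p`, `π k = p ^ k`.
-/

section SupersetWeights

variable {ι : Type*} [DecidableEq ι]

theorem sum_filter_superset_antitone {S : Finset (Finset ι)} {wt : Finset ι → ℝ}
    (hwt : ∀ I ∈ S, 0 ≤ wt I) {s t : Finset ι} (hst : s ⊆ t) :
    ∑ I ∈ S with t ⊆ I, wt I ≤ ∑ I ∈ S with s ⊆ I, wt I :=
  sum_le_sum_of_subset_of_nonneg (monotone_filter_right S fun _ _ => hst.trans)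
    fun I hI _ => hwt I (mem_filter.mp hI).1

variable [Fintype ι]

theorem sum_sum_eq_sum_sum_ite_pair_subset (I : Finset ι) (c : ι → ι → ℝ) :
    ∑ i ∈ I, ∑ j ∈ I, c i j = ∑ i, ∑ j, if {i, j} ⊆ I then c i j else 0 := by
  simp [insert_subset_iff, ite_and]

theorem sum_mul_sum_sum_eq_of_superset_weights (S : Finset (Finset ι)) (wt : Finset ι → ℝ)
    (F : ℕ → ℝ) (hF : ∀ s : Finset ι, ∑ I ∈ S with s ⊆ I, wt I = F #s) (c : ι → ι → ℝ) :
    ∑ I ∈ S, wt I * ∑ i ∈ I, ∑ j ∈ I, c i j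
      = (F 1 - F 2) * ∑ i, c i i + F 2 * ∑ i, ∑ j, c i j := by
  have hpair : ∀ i j : ι,
      F #({i, j} : Finset ι) = (F 1 - F 2) * (if i = j then 1 else 0) + F 2 := by
    intro i j
    by_cases h : i = j
    · simp [h]
    · simp [h, card_pair h]
  calc ∑ I ∈ S, wt I * ∑ i ∈ I, ∑ j ∈ I, c i j
      = ∑ I ∈ S, ∑ i, ∑ j, if {i, j} ⊆ I then wt I * c i j else 0 := by
        refine sum_congr rfl fun I _ => ?_
        simp_rw [sum_sum_eq_sum_sum_ite_pair_subset I, mul_sum, mul_ite, mul_zero]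
    _ = ∑ i, ∑ j, (∑ I ∈ S with {i, j} ⊆ I, wt I) * c i j := by
        simp_rw [sum_mul, sum_filter]
        rw [sum_comm]
        exact sum_congr rfl fun i _ => sum_comm
    _ = (F 1 - F 2) * ∑ i, c i i + F 2 * ∑ i, ∑ j, c i j := by
        simp_rw [hF, hpair, add_mul, sum_add_distrib, mul_assoc, ite_mul, one_mul, zero_mul,
          ← mul_sum, sum_ite_eq, if_pos (mem_univ _)]

theorem card_filter_powersetCard_univ_superset (m : ℕ) (s : Finset ι) :
    #{I ∈ powersetCard m univ | s ⊆ I}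
      = if #s ≤ m then (Fintype.card ι - #s).choose (m - #s) else 0 := by
  split_ifs with hs
  · rw [card_filter_powersetCard_subset s univ m (subset_univ s) hs, card_univ]
  · refine card_eq_zero.mpr (filter_eq_empty_iff.mpr fun I hI hsI => hs ?_)
    exact (card_le_card hsI).trans (mem_powersetCard.mp hI).2.le

theorem prod_sdiff_ite_mem (p : ℝ) (s t : Finset ι) :
    ∏ i ∈ univ \ t, (if i ∈ s then 0 else 1 - p)
      = if s ⊆ t then (1 - p) ^ (Fintype.card ι - #t) else 0 := by
  split_ifs with hst
  · rw [prod_congr rfl fun i hi => if_neg fun his => (mem_sdiff.mp hi).2 (hst his), prod_const,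
      card_univ_sdiff]
  · obtain ⟨i, his, hit⟩ := not_subset.mp hst
    exact prod_eq_zero (mem_sdiff.mpr ⟨mem_univ i, hit⟩) (if_pos his)

theorem sum_filter_powerset_univ_superset_binomial (p : ℝ) (s : Finset ι) :
    ∑ I ∈ univ.powerset with s ⊆ I, p ^ #I * (1 - p) ^ (Fintype.card ι - #I) = p ^ #s := by
  -- expand `∏ i, (p + [i ∉ s] (1 - p)) = p ^ #s` over the subsets `I` of factors equal to `p`
  have h := prod_add (fun _ => p) (fun i => if i ∈ s then 0 else 1 - p) (univ : Finset ι)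
  simp_rw [prod_const, prod_sdiff_ite_mem, mul_ite, mul_zero, ← sum_filter] at h
  rw [← h]
  calc ∏ i, (p + if i ∈ s then 0 else 1 - p) = ∏ i, if i ∈ s then p else 1 :=
        prod_congr rfl fun i _ => by split_ifs <;> ring
    _ = p ^ #s := by simp

end SupersetWeights

section SubsetVariances

variable {Ω Ω' : Type*} [MeasurableSpace Ω] [MeasurableSpace Ω']
  {μ : Measure Ω} {μ' : Measure Ω'} {n : ℕ} {f : Fin n → Ω → ℝ} {g : Fin n → Ω' → ℝ}

theorem sum_mul_variance_eq_of_superset_weights [IsFiniteMeasure μ]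
    (hf : ∀ i, MemLp (f i) 2 μ) (S : Finset (Finset (Fin n))) (wt : Finset (Fin n) → ℝ)
    (F : ℕ → ℝ) (hF : ∀ s : Finset (Fin n), ∑ I ∈ S with s ⊆ I, wt I = F #s) :
    ∑ I ∈ S, wt I * Var[fun ω => ∑ i ∈ I, f i ω; μ]
      = (F 1 - F 2) * sumVar μ f + F 2 * varSum μ f := by
  simp_rw [sumVar, varSum, variance_fun_sum' fun i _ => hf i,
    sum_mul_sum_sum_eq_of_superset_weights S wt F hF,
    ← fun i => covariance_self (μ := μ) (hf i).aemeasurable]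

theorem sum_mul_variance_le_of_sumVar_le_of_varSum_le [IsFiniteMeasure μ] [IsFiniteMeasure μ']
    (hn : 2 ≤ n) (hf : ∀ i, MemLp (f i) 2 μ) (hg : ∀ i, MemLp (g i) 2 μ')
    (hSV : sumVar μ f ≤ sumVar μ' g) (hVS : varSum μ f ≤ varSum μ' g)
    (S : Finset (Finset (Fin n))) (wt : Finset (Fin n) → ℝ) (hwt : ∀ I ∈ S, 0 ≤ wt I)
    (F : ℕ → ℝ) (hF : ∀ s : Finset (Fin n), ∑ I ∈ S with s ⊆ I, wt I = F #s) :
    ∑ I ∈ S, wt I * Var[fun ω => ∑ i ∈ I, f i ω; μ]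
      ≤ ∑ I ∈ S, wt I * Var[fun ω => ∑ i ∈ I, g i ω; μ'] := by
  have : Nontrivial (Fin n) := Fin.nontrivial_iff_two_le.mpr hn
  obtain ⟨i, j, hij⟩ := exists_pair_ne (Fin n)
  have hF2 : 0 ≤ F 2 := by
    rw [← card_pair hij, ← hF]
    exact sum_nonneg fun I hI => hwt I (mem_filter.mp hI).1
  have hF21 : 0 ≤ F 1 - F 2 := by
    rw [sub_nonneg, ← card_pair hij, ← card_singleton i, ← hF, ← hF]
    exact sum_filter_superset_antitone hwt (singleton_subset_iff.mpr (mem_insert_self i {j}))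
  rw [sum_mul_variance_eq_of_superset_weights hf S wt F hF,
    sum_mul_variance_eq_of_superset_weights hg S wt F hF]
  gcongr

theorem Vm_le_of_sumVar_le_of_varSum_le [IsFiniteMeasure μ] [IsFiniteMeasure μ']
    (hn : 2 ≤ n) (hf : ∀ i, MemLp (f i) 2 μ) (hg : ∀ i, MemLp (g i) 2 μ')
    (hSV : sumVar μ f ≤ sumVar μ' g) (hVS : varSum μ f ≤ varSum μ' g) (m : ℕ) :
    Vm μ f m ≤ Vm μ' g m := by
  simp only [Vm, div_eq_inv_mul, mul_sum]
  refine sum_mul_variance_le_of_sumVar_le_of_varSum_le hn hf hg hSV hVS _ _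
    (fun _ _ => by positivity)
    (fun k => (n.choose m : ℝ)⁻¹ * ((if k ≤ m then (n - k).choose (m - k) else 0 : ℕ) : ℝ))
    fun s => ?_
  rw [sum_const, card_filter_powersetCard_univ_superset, Fintype.card_fin, nsmul_eq_mul,
    mul_comm]

theorem Wp_le_of_sumVar_le_of_varSum_le [IsFiniteMeasure μ] [IsFiniteMeasure μ']
    (hn : 2 ≤ n) (hf : ∀ i, MemLp (f i) 2 μ) (hg : ∀ i, MemLp (g i) 2 μ')
    (hSV : sumVar μ f ≤ sumVar μ' g) (hVS : varSum μ f ≤ varSum μ' g)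
    {p : ℝ} (hp0 : 0 ≤ p) (hp1 : p ≤ 1) :
    Wp μ f p ≤ Wp μ' g p := by
  have hq : 0 ≤ 1 - p := sub_nonneg.mpr hp1
  refine sum_mul_variance_le_of_sumVar_le_of_varSum_le hn hf hg hSV hVS _ _
    (fun _ _ => by positivity) (fun k => p ^ k) fun s => ?_
  simpa using sum_filter_powerset_univ_superset_binomial p s

end SubsetVariances

theorem min_sumVar_varSum_implies_min_Vm_Wp_general
    {Ω : Type*} [MeasurableSpace Ω] (μ : MeasureTheory.Measure Ω)
    [MeasureTheory.IsProbabilityMeasure μ]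
    (n : ℕ) (hn : 2 ≤ n) (k : ℝ) (w : Fin n → ℝ)
    (f : Fin n → Ω → ℝ)
    (hf2 : ∀ i, MeasureTheory.MemLp (f i) 2 μ)
    (hminSV : ∀ (Ω' : Type) (_ : MeasurableSpace Ω') (μ' : MeasureTheory.Measure Ω'),
      MeasureTheory.IsProbabilityMeasure μ' → ∀ g : Fin n → Ω' → ℝ,
        (∀ i, MeasureTheory.MemLp (g i) 2 μ') → UnbiasedScheme μ' g w →
          expSamples μ' g ≤ k → sumVar μ f ≤ sumVar μ' g)
    (hminVS : ∀ (Ω' : Type) (_ : MeasurableSpace Ω') (μ' : MeasureTheory.Measure Ω'),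
      MeasureTheory.IsProbabilityMeasure μ' → ∀ g : Fin n → Ω' → ℝ,
        (∀ i, MeasureTheory.MemLp (g i) 2 μ') → UnbiasedScheme μ' g w →
          expSamples μ' g ≤ k → varSum μ f ≤ varSum μ' g) :
    (∀ m : ℕ, 1 ≤ m → m ≤ n →
      ∀ (Ω' : Type) (_ : MeasurableSpace Ω') (μ' : MeasureTheory.Measure Ω'),
        MeasureTheory.IsProbabilityMeasure μ' → ∀ g : Fin n → Ω' → ℝ,
          (∀ i, MeasureTheory.MemLp (g i) 2 μ') → UnbiasedScheme μ' g w →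
            expSamples μ' g ≤ k → Vm μ f m ≤ Vm μ' g m)
    ∧ (∀ p : ℝ, 0 ≤ p → p ≤ 1 →
      ∀ (Ω' : Type) (_ : MeasurableSpace Ω') (μ' : MeasureTheory.Measure Ω'),
        MeasureTheory.IsProbabilityMeasure μ' → ∀ g : Fin n → Ω' → ℝ,
          (∀ i, MeasureTheory.MemLp (g i) 2 μ') → UnbiasedScheme μ' g w →
            expSamples μ' g ≤ k → Wp μ f p ≤ Wp μ' g p) := by
  constructor
  · intro m _ _ Ω' _ μ' _ g hg2 hgu hgk
    exact Vm_le_of_sumVar_le_of_varSum_le hn hf2 hg2 (hminSV Ω' _ μ' ‹_› g hg2 hgu hgk)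
      (hminVS Ω' _ μ' ‹_› g hg2 hgu hgk) m
  · intro p hp0 hp1 Ω' _ μ' _ g hg2 hgu hgk
    exact Wp_le_of_sumVar_le_of_varSum_le hn hf2 hg2 (hminSV Ω' _ μ' ‹_› g hg2 hgu hgk)
      (hminVS Ω' _ μ' ‹_› g hg2 hgu hgk) hp0 hp1

/-- If an unbiased scheme `f` simultaneously minimizes `ΣV` and `VΣ` among all
unbiased schemes using an expected number of at most `k` samples, then it
minimizes `V_m` for every subset size `1 ≤ m ≤ n` and `W_p` for every
`p ∈ [0,1]` among all such schemes. -/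
theorem min_sumVar_varSum_implies_min_Vm_Wp
    {Ω : Type*} [MeasurableSpace Ω] (μ : MeasureTheory.Measure Ω)
    [MeasureTheory.IsProbabilityMeasure μ]
    (n : ℕ) (hn : 2 ≤ n) (k : ℝ) (w : Fin n → ℝ)
    (f : Fin n → Ω → ℝ)
    (hf2 : ∀ i, MeasureTheory.MemLp (f i) 2 μ)
    (hfu : UnbiasedScheme μ f w)
    (hfk : expSamples μ f ≤ k)
    (hminSV : ∀ (Ω' : Type) (_ : MeasurableSpace Ω') (μ' : MeasureTheory.Measure Ω'),
      MeasureTheory.IsProbabilityMeasure μ' → ∀ g : Fin n → Ω' → ℝ,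
        (∀ i, MeasureTheory.MemLp (g i) 2 μ') → UnbiasedScheme μ' g w →
          expSamples μ' g ≤ k → sumVar μ f ≤ sumVar μ' g)
    (hminVS : ∀ (Ω' : Type) (_ : MeasurableSpace Ω') (μ' : MeasureTheory.Measure Ω'),
      MeasureTheory.IsProbabilityMeasure μ' → ∀ g : Fin n → Ω' → ℝ,
        (∀ i, MeasureTheory.MemLp (g i) 2 μ') → UnbiasedScheme μ' g w →
          expSamples μ' g ≤ k → varSum μ f ≤ varSum μ' g) :
    (∀ m : ℕ, 1 ≤ m → m ≤ n →
      ∀ (Ω' : Type) (_ : MeasurableSpace Ω') (μ' : MeasureTheory.Measure Ω'),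
        MeasureTheory.IsProbabilityMeasure μ' → ∀ g : Fin n → Ω' → ℝ,
          (∀ i, MeasureTheory.MemLp (g i) 2 μ') → UnbiasedScheme μ' g w →
            expSamples μ' g ≤ k → Vm μ f m ≤ Vm μ' g m)
    ∧ (∀ p : ℝ, 0 ≤ p → p ≤ 1 →
      ∀ (Ω' : Type) (_ : MeasurableSpace Ω') (μ' : MeasureTheory.Measure Ω'),
        MeasureTheory.IsProbabilityMeasure μ' → ∀ g : Fin n → Ω' → ℝ,
          (∀ i, MeasureTheory.MemLp (g i) 2 μ') → UnbiasedScheme μ' g w →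
            expSamples μ' g ≤ k → Wp μ f p ≤ Wp μ' g p) :=
  min_sumVar_varSum_implies_min_Vm_Wp_general μ n hn k w f hf2 hminSV hminVS
end

section
/- Among all Poisson sampling schemes (independent sampling with probabilities q_i and Horvitz–Thompson estimates ŵ_i = w_i/q_i) with expected sample size ∑_i q_i ≤ k, threshold sampling with the threshold τ chosen so that ∑_i min{1, w_i/τ} = k minimizes the sum of individual variances ΣV = ∑_i w_i²(1−q_i)/q_i. -/
open Finset

lemma pointwise_threshold (w τ q : ℝ) (hw : 0 < w) (hτ : 0 < τ)
    (hq0 : 0 < q) (hq1 : q ≤ 1) :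
    w ^ 2 * (1 - min 1 (w / τ)) / min 1 (w / τ) + τ ^ 2 * (min 1 (w / τ) - q)
      ≤ w ^ 2 * (1 - q) / q := by
  rcases le_or_gt (w / τ) 1 with h | h
  · rw [min_eq_right h]
    have key : w ^ 2 * (1 - w / τ) / (w / τ) = w * τ - w ^ 2 := by
      field_simp
    have key2 : τ ^ 2 * (w / τ - q) = τ * w - τ ^ 2 * q := by
      field_simp
    rw [key, key2, le_div_iff₀ hq0]
    nlinarith [sq_nonneg (w - τ * q)]
  · rw [min_eq_left (le_of_lt h)]
    have hτw : τ ≤ w := le_of_lt ((one_lt_div hτ).mp h)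
    have h1q : (0:ℝ) ≤ 1 - q := by linarith
    have h1 : w ^ 2 * (1 - 1) / 1 = 0 := by ring
    rw [h1, zero_add, le_div_iff₀ hq0]
    nlinarith [mul_nonneg h1q (mul_nonneg (sub_nonneg.2 hτw) (by linarith : (0:ℝ) ≤ w + τ)), mul_nonneg (mul_nonneg h1q h1q) (sq_nonneg τ), sq_nonneg (w - τ)]

/-- Among all Poisson sampling schemes with inclusion probabilities
`q i ∈ (0,1]` and expected sample size `∑ᵢ q i ≤ k`, threshold sampling (with
threshold `τ` chosen so that `∑ᵢ min 1 (w i / τ) = k`) minimizes the sum of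
individual Horvitz–Thompson variances `∑ᵢ w i² (1 − q i)/q i`. -/
theorem threshold_sampling_minimizes_sumVar
    (n : ℕ) (w : Fin n → ℝ) (hw : ∀ i, 0 < w i)
    (k : ℝ) (hk : k ≤ n) (τ : ℝ) (hτ : 0 < τ)
    (hτk : ∑ i, min 1 (w i / τ) = k)
    (q : Fin n → ℝ) (hq0 : ∀ i, 0 < q i) (hq1 : ∀ i, q i ≤ 1)
    (hqk : ∑ i, q i ≤ k) :
    ∑ i, (w i) ^ 2 * (1 - min 1 (w i / τ)) / min 1 (w i / τ)
      ≤ ∑ i, (w i) ^ 2 * (1 - q i) / q i := by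
  have h1 : ∑ i, (w i) ^ 2 * (1 - min 1 (w i / τ)) / min 1 (w i / τ)
      ≤ ∑ i, ((w i) ^ 2 * (1 - min 1 (w i / τ)) / min 1 (w i / τ)
          + τ ^ 2 * (min 1 (w i / τ) - q i)) := by
    rw [Finset.sum_add_distrib]
    have : ∑ i, τ ^ 2 * (min 1 (w i / τ) - q i)
        = τ ^ 2 * (k - ∑ i, q i) := by
      rw [← Finset.mul_sum, Finset.sum_sub_distrib, hτk]
    rw [this]
    nlinarith [sq_nonneg τ]
  refine h1.trans (Finset.sum_le_sum fun i _ => ?_)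
  exact pointwise_threshold (w i) τ (q i) (hw i) hτ (hq0 i) (hq1 i)
end

section
/- For uniform sampling without replacement of k from n items with weights w_i = 1 (i < n) and w_n = ℓ, the variance of the total estimate satisfies VΣ ≥ n·ℓ²/k − (ℓ + n − 1)². -/
open Finset

/-! Every estimate `w i * n / k` is nonnegative, so the squared total estimate is at least the
square of the heavy item's estimate `ℓ n / k` whenever that item is sampled. It is sampled with
probability `k / n`, giving `E[ŵ²] ≥ (k / n) (ℓ n / k)² = n ℓ² / k`. -/

theorem card_filter_mem_powersetCard {ι : Type*} [DecidableEq ι] {s : Finset ι} {a : ι}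
    (ha : a ∈ s) {k : ℕ} (hk : 1 ≤ k) :
    #{S ∈ s.powersetCard k | a ∈ S} = (#s - 1).choose (k - 1) := by
  simpa only [singleton_subset_iff, card_singleton] using
    card_filter_powersetCard_subset {a} s k (singleton_subset_iff.2 ha) (by simpa using hk)

theorem mul_choose_sub_one_sub_one_eq (n : ℕ) {k : ℕ} (hk : 1 ≤ k) :
    n * (n - 1).choose (k - 1) = k * n.choose k := by
  obtain ⟨j, rfl⟩ : ∃ j, k = j + 1 := ⟨k - 1, by omega⟩
  cases n with
  | zero => simp
  | succ m => simpa [mul_comm] using Nat.add_one_mul_choose_eq m j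

theorem card_filter_mem_mul_sq_le_sum_sq_sum {ι R : Type*} [DecidableEq ι] [CommRing R]
    [LinearOrder R] [IsStrictOrderedRing R] {f : ι → R} (hf : ∀ i, 0 ≤ f i)
    (𝒜 : Finset (Finset ι)) (a : ι) :
    #{S ∈ 𝒜 | a ∈ S} * f a ^ 2 ≤ ∑ S ∈ 𝒜, (∑ i ∈ S, f i) ^ 2 := by
  calc (#{S ∈ 𝒜 | a ∈ S} : R) * f a ^ 2 = ∑ S ∈ 𝒜 with a ∈ S, f a ^ 2 := by
        rw [sum_const, nsmul_eq_mul]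
    _ ≤ ∑ S ∈ 𝒜 with a ∈ S, (∑ i ∈ S, f i) ^ 2 := by
        gcongr with S hS
        · exact hf a
        · exact single_le_sum (fun i _ => hf i) (mem_filter.1 hS).2
    _ ≤ ∑ S ∈ 𝒜, (∑ i ∈ S, f i) ^ 2 :=
        sum_le_sum_of_subset_of_nonneg (filter_subset _ _) fun _ _ _ => sq_nonneg _

/-- Uniform sampling without replacement of `k` of `n` items with weights
`w i = 1` for `i ≠ i₀` and `w i₀ = ℓ ≥ 0`: the variance of the estimate of the
total satisfies `VΣ ≥ n·ℓ²/k − (ℓ + n − 1)²`. -/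
theorem uniform_sampling_total_variance_lower_bound
    (n k : ℕ) (hk1 : 1 ≤ k) (hkn : k ≤ n)
    (ℓ : ℝ) (hℓ : 0 ≤ ℓ) (w : Fin n → ℝ) (i₀ : Fin n)
    (hw₀ : w i₀ = ℓ) (hw1 : ∀ i, i ≠ i₀ → w i = 1) :
    (∑ S ∈ (Finset.univ : Finset (Fin n)).powersetCard k,
        (∑ i ∈ S, w i * n / k) ^ 2) / (n.choose k : ℝ)
      - (ℓ + (n : ℝ) - 1) ^ 2
    ≥ (n : ℝ) * ℓ ^ 2 / k - (ℓ + (n : ℝ) - 1) ^ 2 := by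
  have hw_nonneg : ∀ i, 0 ≤ w i * n / k := fun i => by
    rcases eq_or_ne i i₀ with rfl | hi
    · rw [hw₀]; positivity
    · rw [hw1 i hi]; positivity
  have hsampled := card_filter_mem_mul_sq_le_sum_sq_sum hw_nonneg (univ.powersetCard k) i₀
  rw [card_filter_mem_powersetCard (mem_univ i₀) hk1, card_univ, Fintype.card_fin, hw₀]
    at hsampled
  have hincl : (n : ℝ) * (n - 1).choose (k - 1) = k * n.choose k := by
    exact_mod_cast mul_choose_sub_one_sub_one_eq n hk1
  rw [ge_iff_le, sub_le_sub_iff_right, le_div_iff₀ (by exact_mod_cast Nat.choose_pos hkn)]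
  calc (n : ℝ) * ℓ ^ 2 / k * n.choose k = (n - 1).choose (k - 1) * (ℓ * n / k) ^ 2 := by
        field_simp
        linear_combination -(n * ℓ ^ 2) * hincl
    _ ≤ _ := hsampled
end

section
/- In probability-proportional-to-size sampling with replacement with k draws from weights w_i = 1 (i ∈ [n−1]) and w_n = ℓ, a unit item is sampled with probability p_1 = 1 − (1 − 1/(ℓ+n−1))^k, and the total variance satisfies ΣV ≥ (n−1)·(1−p_1)/p_1 ≥ (n−1)·((ℓ+n−1)/k − 1). -/
open Finset

/-- Probability-proportional-to-size sampling with replacement with `k` draws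
from weights `w i = 1` (`i ≠ i₀`) and `w i₀ = ℓ`: each item is sampled with
probability `p i = 1 − (1 − w i / w_[n])^k`, in particular a unit item with
probability `p₁ = 1 − (1 − 1/(ℓ+n−1))^k`, and the sum of the individual
Horvitz–Thompson variances `ΣV = ∑ᵢ w i²(1−p i)/p i` satisfies
`ΣV ≥ (n−1)(1−p₁)/p₁ ≥ (n−1)((ℓ+n−1)/k − 1)`. -/
theorem pps_with_replacement_variance_lower_bound
    (n k : ℕ) (hn : 2 ≤ n) (hk1 : 1 ≤ k)
    (ℓ : ℝ) (hℓ : 0 < ℓ) (w : Fin n → ℝ) (i₀ : Fin n)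
    (hw₀ : w i₀ = ℓ) (hw1 : ∀ i, i ≠ i₀ → w i = 1) :
    (∀ i, i ≠ i₀ →
        1 - (1 - w i / ∑ j, w j) ^ k = 1 - (1 - 1 / (ℓ + (n : ℝ) - 1)) ^ k)
    ∧ ∑ i, (w i) ^ 2 * (1 - (1 - (1 - w i / ∑ j, w j) ^ k))
          / (1 - (1 - w i / ∑ j, w j) ^ k)
        ≥ ((n : ℝ) - 1) * (1 - (1 - (1 - 1 / (ℓ + (n : ℝ) - 1)) ^ k))
            / (1 - (1 - 1 / (ℓ + (n : ℝ) - 1)) ^ k)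
    ∧ ((n : ℝ) - 1) * (1 - (1 - (1 - 1 / (ℓ + (n : ℝ) - 1)) ^ k))
          / (1 - (1 - 1 / (ℓ + (n : ℝ) - 1)) ^ k)
        ≥ ((n : ℝ) - 1) * ((ℓ + (n : ℝ) - 1) / k - 1) := by
  have hn1 : (1:ℝ) ≤ (n:ℝ) - 1 := by
    have : (2:ℝ) ≤ (n:ℝ) := by exact_mod_cast hn
    linarith
  set W : ℝ := ℓ + (n:ℝ) - 1 with hW
  have hW1 : 1 < W := by simp only [hW]; linarith
  have hW0 : 0 < W := by linarith
  have hcard : (({i₀}ᶜ : Finset (Fin n)).card : ℝ) = (n:ℝ) - 1 := by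
    rw [Finset.card_compl, Finset.card_singleton, Fintype.card_fin]
    have : 1 ≤ n := by omega
    push_cast [Nat.cast_sub this]
    ring
  have hsum : ∑ j, w j = W := by
    rw [← Finset.sum_compl_add_sum {i₀} w]
    have : ∑ j ∈ ({i₀}ᶜ : Finset (Fin n)), w j = (n:ℝ) - 1 := by
      rw [Finset.sum_congr rfl (fun j hj => hw1 j (by simpa using hj))]
      simp [hcard]
    rw [this]
    simp [hw₀, hW]; ring
  -- p₁ facts
  have hx0 : (0:ℝ) ≤ 1 - 1 / W := by
    have : 1 / W ≤ 1 := by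
      rw [div_le_one hW0]; linarith
    linarith
  have hx1 : 1 - 1 / W < 1 := by
    have : 0 < 1 / W := by positivity
    linarith
  have hp1pos : 0 < 1 - (1 - 1 / W) ^ k := by
    have := pow_lt_one₀ hx0 hx1 (by omega : k ≠ 0)
    linarith
  have hp1le1 : (1 - 1 / W) ^ k ≥ 0 := pow_nonneg hx0 k
  -- first conjunct
  have h1 : ∀ i, i ≠ i₀ →
      1 - (1 - w i / ∑ j, w j) ^ k = 1 - (1 - 1 / W) ^ k := by
    intro i hi
    rw [hsum, hw1 i hi]
  refine ⟨h1, ?_, ?_⟩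
  · -- second conjunct
    set c : ℝ := (1 - (1 - 1 / W) ^ k) with hc
    rw [← Finset.sum_compl_add_sum {i₀}]
    have hrest : ∑ i ∈ ({i₀}ᶜ : Finset (Fin n)),
        (w i) ^ 2 * (1 - (1 - (1 - w i / ∑ j, w j) ^ k))
          / (1 - (1 - w i / ∑ j, w j) ^ k)
        = ((n:ℝ) - 1) * ((1 - c) / c) := by
      have heq : ∀ i ∈ ({i₀}ᶜ : Finset (Fin n)),
          (w i) ^ 2 * (1 - (1 - (1 - w i / ∑ j, w j) ^ k))
            / (1 - (1 - w i / ∑ j, w j) ^ k) = (1 - c) / c := by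
        intro i hi
        have hi' : i ≠ i₀ := by simpa using hi
        rw [h1 i hi', hw1 i hi']
        ring
      rw [Finset.sum_congr rfl heq, Finset.sum_const, nsmul_eq_mul, hcard]
    rw [hrest, Finset.sum_singleton]
    have hterm : 0 ≤ (w i₀) ^ 2 * (1 - (1 - (1 - w i₀ / ∑ j, w j) ^ k))
          / (1 - (1 - w i₀ / ∑ j, w j) ^ k) := by
      rw [hsum, hw₀]
      have hy0 : (0:ℝ) ≤ 1 - ℓ / W := by
        have : ℓ / W ≤ 1 := by rw [div_le_one hW0]; simp only [hW]; linarith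
        linarith
      have hy1 : 1 - ℓ / W < 1 := by
        have : 0 < ℓ / W := by positivity
        linarith
      have hp0 : 0 < 1 - (1 - ℓ / W) ^ k := by
        have := pow_lt_one₀ hy0 hy1 (by omega : k ≠ 0)
        linarith
      have hp0' : (1 - ℓ / W) ^ k ≥ 0 := pow_nonneg hy0 k
      apply div_nonneg _ (le_of_lt hp0)
      have : (0:ℝ) ≤ ℓ ^ 2 := sq_nonneg ℓ
      nlinarith
    have : ((n:ℝ) - 1) * (1 - c) / c = ((n:ℝ) - 1) * ((1 - c) / c) := by ring
    rw [this]
    linarith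
  · -- third conjunct
    have hk0 : (0:ℝ) < (k:ℝ) := by exact_mod_cast hk1
    have hbern : 1 - (k:ℝ) / W ≤ (1 - 1 / W) ^ k := by
      have := one_add_mul_le_pow (a := -(1/W)) (by nlinarith [hW0] : (-2:ℝ) ≤ -(1/W)) k
      calc 1 - (k:ℝ) / W = 1 + (k:ℝ) * (-(1/W)) := by ring
        _ ≤ (1 + -(1/W)) ^ k := this
        _ = (1 - 1/W) ^ k := by ring_nf
    set p : ℝ := 1 - (1 - 1 / W) ^ k with hp
    have hple : p ≤ (k:ℝ) / W := by simp only [hp]; linarith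
    have hinv : W / (k:ℝ) ≤ 1 / p := by
      rw [div_le_div_iff₀ hk0 hp1pos]
      calc W * p ≤ W * ((k:ℝ)/W) := by nlinarith
        _ = 1 * (k:ℝ) := by field_simp
    have key : W / (k:ℝ) - 1 ≤ (1 - p) / p := by
      have h2 : (1 - p) / p = 1 / p - 1 := by field_simp
      linarith [hinv, h2]
    have hn0 : (0:ℝ) ≤ (n:ℝ) - 1 := by linarith
    have := mul_le_mul_of_nonneg_left key hn0
    calc ((n:ℝ) - 1) * (W / (k:ℝ) - 1) ≤ ((n:ℝ) - 1) * ((1-p)/p) := this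
      _ = ((n:ℝ) - 1) * (1-p) / p := by ring
end
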